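/- arXiv:0906.0625 — 2 statements merged into one kernel-verified Lean document; each statement's English description precedes it below -/
import Mathlib

section
/- Let V ⊂ ℝⁿ be a bounded nonempty open set and c ∈ ℝ. Suppose w ∈ C(closure V) is locally Lipschitz in V, is an absolute minimizer for H(p,z) = ½|p|² − z on V, and w = c on ∂V. Then w ≡ c on closure V. -/
/-!
Comparing `w` with the constant `k` on an open `S` with `closure S ⊆ V` and `w = k` on `∂S`
gives `½|Dw|² - w ≤ -k` a.e. on `S`. On the sublevel sets `{w < k}`, `k < c`, this forces
`w ≥ c`; on the superlevel sets `{w > q}`, `q > c`, it gives `½|Dw|² ≤ w - q`, so `Dw = 0` a.e.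
on `{w > c}`. A Lipschitz function with a.e. vanishing derivative is locally constant (its
mollifications have vanishing derivative, by integration by parts), so if `max w > c` the set
where `w` attains its maximum over `closure V` is clopen in `ℝⁿ`, which is impossible since
`V ≠ ℝⁿ` (otherwise `∂V = ∅` and every constant would be an admissible competitor).
-/

open Set MeasureTheory

noncomputable section

abbrev Euc (n : ℕ) := EuclideanSpace ℝ (Fin n)

/-- Second derivative bilinear form of `φ` at `x` applied to `(p, q)`. -/
def D2 {n : ℕ} (φ : Euc n → ℝ) (x p q : Euc n) : ℝ :=
  iteratedFDeriv ℝ 2 φ x ![p, q]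

/-- `u` is a viscosity subsolution of `Δ∞ u - |Du|² = 0` on `Ω`. -/
def IsSubsol {n : ℕ} (Ω : Set (Euc n)) (u : Euc n → ℝ) : Prop :=
  ∀ φ : Euc n → ℝ, ContDiff ℝ 2 φ → ∀ x₀ ∈ Ω,
    IsLocalMaxOn (fun x => u x - φ x) Ω x₀ →
    D2 φ x₀ (gradient φ x₀) (gradient φ x₀) - ‖gradient φ x₀‖ ^ 2 ≥ 0

/-- `u` is a viscosity supersolution of `Δ∞ u - |Du|² = 0` on `Ω`. -/
def IsSupersol {n : ℕ} (Ω : Set (Euc n)) (u : Euc n → ℝ) : Prop :=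
  ∀ φ : Euc n → ℝ, ContDiff ℝ 2 φ → ∀ x₀ ∈ Ω,
    IsLocalMinOn (fun x => u x - φ x) Ω x₀ →
    D2 φ x₀ (gradient φ x₀) (gradient φ x₀) - ‖gradient φ x₀‖ ^ 2 ≤ 0

/-- `u` is a viscosity solution of `Δ∞ u - |Du|² = 0` on `Ω`. -/
def IsSol {n : ℕ} (Ω : Set (Euc n)) (u : Euc n → ℝ) : Prop :=
  IsSubsol Ω u ∧ IsSupersol Ω u

/-- `u` is a viscosity subsolution of the normalized equation `Δ∞ u / |Du|² = 1` on `Ω`. -/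
def IsNormSubsol {n : ℕ} (Ω : Set (Euc n)) (u : Euc n → ℝ) : Prop :=
  ∀ φ : Euc n → ℝ, ContDiff ℝ 2 φ → ∀ x₀ ∈ Ω,
    IsLocalMaxOn (fun x => u x - φ x) Ω x₀ →
    (gradient φ x₀ ≠ 0 →
      D2 φ x₀ (gradient φ x₀) (gradient φ x₀) ≥ ‖gradient φ x₀‖ ^ 2) ∧
    (gradient φ x₀ = 0 → ∃ p : Euc n, ‖p‖ = 1 ∧ D2 φ x₀ p p ≥ 1)

/-- `u` is a viscosity supersolution of the normalized equation `Δ∞ u / |Du|² = 1` on `Ω`. -/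
def IsNormSupersol {n : ℕ} (Ω : Set (Euc n)) (u : Euc n → ℝ) : Prop :=
  ∀ φ : Euc n → ℝ, ContDiff ℝ 2 φ → ∀ x₀ ∈ Ω,
    IsLocalMinOn (fun x => u x - φ x) Ω x₀ →
    (gradient φ x₀ ≠ 0 →
      D2 φ x₀ (gradient φ x₀) (gradient φ x₀) ≤ ‖gradient φ x₀‖ ^ 2) ∧
    (gradient φ x₀ = 0 → ∃ p : Euc n, ‖p‖ = 1 ∧ D2 φ x₀ p p ≤ 1)

/-- `u` is an absolute minimizer for the Hamiltonian `H = H(p, z)` on `Ω`. -/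
def IsAbsMin {n : ℕ} (H : Euc n → ℝ → ℝ) (Ω : Set (Euc n)) (u : Euc n → ℝ) : Prop :=
  ∀ V : Set (Euc n), IsOpen V → closure V ⊆ Ω →
    ∀ v : Euc n → ℝ, (∃ K : NNReal, LipschitzOnWith K v (closure V)) →
      (∀ x ∈ frontier V, v x = u x) →
      essSup (fun x => H (gradient u x) (u x)) (volume.restrict V) ≤
        essSup (fun x => H (gradient v x) (v x)) (volume.restrict V)

/-- The Hamiltonian `H(p, z) = ½|p|² - z`. -/
def Ham {n : ℕ} (p : Euc n) (z : ℝ) : ℝ := (1 / 2) * ‖p‖ ^ 2 - z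

/-- The auxiliary Hamiltonian `Ĥ(p, z) = ½|p|² - min(z, 0)`. -/
def HamHat {n : ℕ} (p : Euc n) (z : ℝ) : ℝ := (1 / 2) * ‖p‖ ^ 2 - min z 0

/-- `u` is locally Lipschitz on the open set `Ω`. -/
def LocLipOn {n : ℕ} (Ω : Set (Euc n)) (u : Euc n → ℝ) : Prop :=
  ∀ x ∈ Ω, ∃ (K : NNReal) (t : Set (Euc n)), t ∈ nhds x ∧ LipschitzOnWith K u t

/-- `u` is semiconvex on `S`: for some `C > 0`, `x ↦ u x + C|x|²` is convex on every
convex subset of `S`. -/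
def SemiconvexOn {n : ℕ} (S : Set (Euc n)) (u : Euc n → ℝ) : Prop :=
  ∃ C > (0 : ℝ), ∀ B : Set (Euc n), Convex ℝ B → B ⊆ S →
    ConvexOn ℝ B (fun x => u x + C * ‖x‖ ^ 2)

/-- The graph of `f` has a well inside `Ω`. -/
def HasWell {n : ℕ} (Ω : Set (Euc n)) (f : Euc n → ℝ) : Prop :=
  ∃ V : Set (Euc n), V.Nonempty ∧ IsOpen V ∧ V ⊆ Ω ∧
    sInf (f '' closure V) < sInf (f '' frontier V)

/-- The graph of `f` has a flat piece inside `Ω`. -/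
def HasFlat {n : ℕ} (Ω : Set (Euc n)) (f : Euc n → ℝ) : Prop :=
  ∃ V : Set (Euc n), V.Nonempty ∧ IsOpen V ∧ V ⊆ Ω ∧ ∃ c : ℝ, ∀ x ∈ V, f x = c

/-- `Ω_δ = {x ∈ Ω : dist(x, ∂Ω) > δ}`. -/
def innerSet {n : ℕ} (Ω : Set (Euc n)) (δ : ℝ) : Set (Euc n) :=
  {x ∈ Ω | δ < Metric.infDist x (frontier Ω)}

open Metric Filter Topology
open scoped Convolution

section AeFDerivZero

variable {E : Type*} [NormedAddCommGroup E] [NormedSpace ℝ E] [FiniteDimensional ℝ E]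
  [MeasurableSpace E] [BorelSpace E] {μ : Measure E} [μ.IsAddHaarMeasure]
  {f : E → ℝ} {C : NNReal}

theorem LipschitzWith.hasFDerivAt_convolution_eq_zero (hf : LipschitzWith C f) {U : Set E}
    (hae : ∀ᵐ y ∂μ, y ∈ U → fderiv ℝ f y = 0) (φ : ContDiffBump (0 : E)) {z : E}
    (hz : ball z φ.rOut ⊆ U) :
    HasFDerivAt (φ.normed μ ⋆[ContinuousLinearMap.lsmul ℝ ℝ, μ] f) (0 : E →L[ℝ] ℝ) z := by
  set L := ContinuousLinearMap.lsmul ℝ ℝ (E := ℝ)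
  have hbump : ContDiff ℝ 1 (φ.normed μ) := φ.contDiff_normed
  set g : E → ℝ := fun y => (φ.normed μ) (z - y)
  have hg : ContDiff ℝ 1 g := hbump.comp (contDiff_const.sub contDiff_id)
  have hgc : HasCompactSupport g :=
    φ.hasCompactSupport_normed.comp_homeomorph (Homeomorph.subLeft z)
  obtain ⟨D, hgD⟩ := hg.lipschitzWith_of_hasCompactSupport hgc one_ne_zero
  have hint := ((φ.hasCompactSupport_normed.fderiv ℝ).convolutionExists_left (L.precompL E)
    (hbump.continuous_fderiv one_ne_zero) hf.continuous.locallyIntegrable z (μ := μ)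
    ).integrable_swap
  have hlineDeriv (y v : E) : lineDeriv ℝ g y (-v) = fderiv ℝ (φ.normed μ) (z - y) v := by
    have := ((hbump.differentiable one_ne_zero (z - y)).hasFDerivAt.comp y
      ((hasFDerivAt_const z y).sub (hasFDerivAt_id y))).hasLineDerivAt (-v)
    simpa [Function.comp_def] using this.lineDeriv
  have hzero (v : E) : ∫ y, lineDeriv ℝ f y v * g y ∂μ = 0 := by
    refine integral_eq_zero_of_ae ?_
    filter_upwards [hae, hf.ae_differentiableAt] with y hyU hyd
    by_cases hy : y ∈ ball z φ.rOut
    · simp [(hyd.hasFDerivAt.hasLineDerivAt v).lineDeriv, hyU (hz hy)]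
    · have : φ.normed μ (z - y) = 0 := by
        rw [← Function.notMem_support, φ.support_normed_eq]
        simpa [dist_eq_norm, norm_sub_rev] using hy
      simp [g, this]
  refine (φ.hasCompactSupport_normed.hasFDerivAt_convolution_left L hbump
    hf.continuous.locallyIntegrable (μ := μ) z).congr_fderiv ?_
  ext v
  rw [convolution_eq_swap, ContinuousLinearMap.integral_apply hint]
  simp only [ContinuousLinearMap.precompL_apply, zero_apply, L,
    ContinuousLinearMap.lsmul_apply, smul_eq_mul]
  simp_rw [← hlineDeriv]
  rw [← hf.integral_lineDeriv_mul_eq hgD hgc, hzero]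

theorem LipschitzWith.eq_of_ae_fderiv_eq_zero_on_ball (hf : LipschitzWith C f) {c : E} {r : ℝ}
    (hae : ∀ᵐ y ∂μ, y ∈ ball c r → fderiv ℝ f y = 0) {x : E} (hx : x ∈ ball c r) :
    f x = f c := by
  let φ (k : ℕ) : ContDiffBump (0 : E) :=
    ⟨1 / (k + 2), 1 / (k + 1), by positivity, by gcongr; norm_num⟩
  have hφ : Tendsto (fun k => (φ k).rOut) atTop (𝓝 0) := tendsto_one_div_add_atTop_nhds_zero_nat
  have hconst : ∀ᶠ k in atTop, ((φ k).normed μ ⋆[ContinuousLinearMap.lsmul ℝ ℝ, μ] f) x =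
      ((φ k).normed μ ⋆[ContinuousLinearMap.lsmul ℝ ℝ, μ] f) c := by
    filter_upwards [hφ.eventually (gt_mem_nhds (sub_pos.2 (mem_ball.1 hx)))] with k hk
    have hderiv (z : E) (hz : z ∈ ball c (r - (φ k).rOut)) :
        HasFDerivWithinAt ((φ k).normed μ ⋆[ContinuousLinearMap.lsmul ℝ ℝ, μ] f) 0
          (ball c (r - (φ k).rOut)) z :=
      (hf.hasFDerivAt_convolution_eq_zero hae (φ k)
        (ball_subset_ball' (by linarith [mem_ball.1 hz]))).hasFDerivWithinAt
    have := (convex_ball c _).norm_image_sub_le_of_norm_hasFDerivWithin_le hderiv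
      (fun _ _ => norm_zero.le) (mem_ball_self (by linarith [dist_nonneg (x := x) (y := c)]))
      (mem_ball.2 (by linarith))
    simpa [sub_eq_zero] using this
  exact tendsto_nhds_unique
    ((ContDiffBump.convolution_tendsto_right_of_continuous hφ hf.continuous x).congr' hconst)
    (ContDiffBump.convolution_tendsto_right_of_continuous hφ hf.continuous c)

theorem LocallyLipschitzOn.isOpen_inter_preimage_of_ae_fderiv_eq_zero {s : Set E}
    (hs : IsOpen s) (hf : LocallyLipschitzOn s f) (hae : ∀ᵐ y ∂μ, y ∈ s → fderiv ℝ f y = 0)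
    (t : Set ℝ) : IsOpen (s ∩ f ⁻¹' t) := by
  refine Metric.isOpen_iff.2 fun x ⟨hxs, hxt⟩ => ?_
  obtain ⟨K, u, hu, hfu⟩ := hf hxs
  rw [hs.nhdsWithin_eq hxs] at hu
  obtain ⟨r, hr, hrsub⟩ := Metric.mem_nhds_iff.1 (inter_mem hu (hs.mem_nhds hxs))
  obtain ⟨g, hg, hfg⟩ := (hfu.mono (hrsub.trans inter_subset_left)).extend_real
  have hae_g : ∀ᵐ y ∂μ, y ∈ ball x r → fderiv ℝ g y = 0 := by
    filter_upwards [hae] with y hy hyr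
    have hgf : g =ᶠ[𝓝 y] f :=
      eventually_of_mem (isOpen_ball.mem_nhds hyr) fun z hz => (hfg hz).symm
    rw [hgf.fderiv_eq, hy (hrsub hyr).2]
  refine ⟨r, hr, fun y hy => ⟨(hrsub hy).2, ?_⟩⟩
  rw [mem_preimage, hfg hy, hg.eq_of_ae_fderiv_eq_zero_on_ball hae_g hy, ← hfg (mem_ball_self hr)]
  exact hxt

end AeFDerivZero

theorem LocallyLipschitzOn.exists_bound_norm_fderiv {E F : Type*} [NormedAddCommGroup E]
    [NormedSpace ℝ E] [NormedAddCommGroup F] [NormedSpace ℝ F] {f : E → F} {s K : Set E}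
    (hs : IsOpen s) (hf : LocallyLipschitzOn s f) (hK : IsCompact K) (hKs : K ⊆ s) :
    ∃ C, ∀ x ∈ K, ‖fderiv ℝ f x‖ ≤ C := by
  refine hK.induction_on ⟨0, by simp⟩ (fun t u htu ⟨C, hC⟩ => ⟨C, fun x hx => hC x (htu hx)⟩)
    (fun t u ⟨C, hC⟩ ⟨D, hD⟩ => ⟨max C D, fun x hx => hx.elim
      (fun hxt => (hC x hxt).trans (le_max_left C D))
      (fun hxu => (hD x hxu).trans (le_max_right C D))⟩) fun x hx => ?_
  obtain ⟨L, u, hu, hfu⟩ := hf (hKs hx)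
  rw [hs.nhdsWithin_eq (hKs hx)] at hu
  exact ⟨interior u, mem_nhdsWithin_of_mem_nhds (interior_mem_nhds.2 hu), L, fun y hy =>
    norm_fderiv_le_of_lipschitzOn ℝ (mem_interior_iff_mem_nhds.1 hy) hfu⟩

section BoundaryValues

variable {X β : Type*} [TopologicalSpace X] {V : Set X} {w : X → β} {c : β}

theorem IsOpen.mem_of_mem_closure_of_ne (hV : IsOpen V) (hbd : ∀ x ∈ frontier V, w x = c)
    {x : X} (hx : x ∈ closure V) (hne : w x ≠ c) : x ∈ V := by
  by_contra hxV
  exact hne (hbd x (hV.frontier_eq ▸ ⟨hx, hxV⟩))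

theorem IsOpen.closure_inter_preimage_subset [TopologicalSpace β] (hV : IsOpen V)
    (hw : ContinuousOn w (closure V)) (hbd : ∀ x ∈ frontier V, w x = c) {O : Set β}
    (hcO : c ∉ closure O) :
    closure (V ∩ w ⁻¹' O) ⊆ V ∩ w ⁻¹' closure O := by
  intro x hx
  obtain ⟨hxV, hxO⟩ : x ∈ closure V ∩ w ⁻¹' closure O :=
    closure_minimal (inter_subset_inter subset_closure (preimage_mono subset_closure))
      (hw.preimage_isClosed_of_isClosed isClosed_closure isClosed_closure) hx
  exact ⟨hV.mem_of_mem_closure_of_ne hbd hxV fun h => hcO (h ▸ hxO), hxO⟩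

theorem IsOpen.frontier_inter_preimage_subset [TopologicalSpace β] (hV : IsOpen V)
    (hw : ContinuousOn w (closure V)) (hbd : ∀ x ∈ frontier V, w x = c) {O : Set β}
    (hO : IsOpen O) (hcO : c ∉ closure O) :
    frontier (V ∩ w ⁻¹' O) ⊆ w ⁻¹' frontier O := by
  intro x hx
  rw [((hw.mono subset_closure).isOpen_inter_preimage hV hO).frontier_eq] at hx
  obtain ⟨hxV, hxO⟩ := hV.closure_inter_preimage_subset hw hbd hcO hx.1
  exact hO.frontier_eq ▸ ⟨hxO, fun h => hx.2 ⟨hxV, h⟩⟩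

theorem IsOpen.le_of_frontier_eq_of_isOpen_level [PreconnectedSpace X] {V : Set X} {w : X → ℝ}
    {c : ℝ} (hV : IsOpen V) (hVne : V ≠ univ) (hVc : IsCompact (closure V))
    (hw : ContinuousOn w (closure V)) (hbd : ∀ x ∈ frontier V, w x = c)
    (hloc : ∀ t : Set ℝ, IsOpen (V ∩ w ⁻¹' Ioi c ∩ w ⁻¹' t)) : ∀ x ∈ V, w x ≤ c := by
  intro x₀ hx₀
  by_contra! hx₀c
  obtain ⟨z, hz, hmax⟩ := hVc.exists_isMaxOn ⟨x₀, subset_closure hx₀⟩ hw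
  have hcz : c < w z := hx₀c.trans_le (hmax (subset_closure hx₀))
  have hT : closure V ∩ w ⁻¹' {w z} = V ∩ w ⁻¹' Ioi c ∩ w ⁻¹' {w z} := by
    refine Subset.antisymm (fun x ⟨hx, hxz⟩ => ?_) fun x ⟨⟨hx, _⟩, hxz⟩ => ⟨subset_closure hx, hxz⟩
    rw [mem_preimage, mem_singleton_iff] at hxz
    exact ⟨⟨hV.mem_of_mem_closure_of_ne hbd hx (hxz ▸ hcz.ne'), (hxz.symm ▸ hcz : c < w x)⟩, hxz⟩
  have hclopen : IsClopen (closure V ∩ w ⁻¹' {w z}) :=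
    ⟨hw.preimage_isClosed_of_isClosed isClosed_closure isClosed_singleton, hT ▸ hloc {w z}⟩
  refine hVne (eq_univ_of_univ_subset ?_)
  rw [← hclopen.eq_univ ⟨z, hz, rfl⟩, hT]
  exact inter_subset_left.trans inter_subset_left

end BoundaryValues

section AbsoluteMinimizer

variable {n : ℕ} {V S : Set (Euc n)} {w : Euc n → ℝ} {k c : ℝ}

theorem LocLipOn.locallyLipschitzOn (h : LocLipOn V w) : LocallyLipschitzOn V w := fun x hx =>
  let ⟨K, t, ht, hK⟩ := h x hx
  ⟨K, t, mem_nhdsWithin_of_mem_nhds ht, hK⟩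

theorem IsAbsMin.ae_ham_le_of_frontier_eq (hwmin : IsAbsMin Ham V w) (hV : IsOpen V)
    (hwl : LocallyLipschitzOn V w) (hS : IsOpen S) (hSV : closure S ⊆ V)
    (hSb : Bornology.IsBounded S) (hfr : ∀ x ∈ frontier S, w x = k) :
    ∀ᵐ x, x ∈ S → Ham (gradient w x) (w x) ≤ -k := by
  rcases S.eq_empty_or_nonempty with rfl | hSne
  · simp
  have hSc : IsCompact (closure S) := hSb.isCompact_closure
  obtain ⟨C₁, hC₁⟩ := hwl.exists_bound_norm_fderiv hV hSc hSV
  obtain ⟨C₂, hC₂⟩ := hSc.exists_bound_of_continuousOn (hwl.continuousOn.mono hSV)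
  -- `ae_le_essSup` needs an upper bound: the real `essSup` of an unbounded function is junk.
  have hbdd : IsBoundedUnder (· ≤ ·) (ae (volume.restrict S))
      fun x => Ham (gradient w x) (w x) := by
    refine ⟨C₁ ^ 2 / 2 + C₂, eventually_map.2 ?_⟩
    filter_upwards [ae_restrict_mem hS.measurableSet] with x hx
    have h₁ : ‖gradient w x‖ ≤ C₁ := by simpa [gradient] using hC₁ x (subset_closure hx)
    have h₂ := abs_le.1 (hC₂ x (subset_closure hx))
    unfold Ham
    nlinarith [norm_nonneg (gradient w x)]
  have hcomp : essSup (fun x => Ham (gradient w x) (w x)) (volume.restrict S) ≤ -k := by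
    have hμ : volume.restrict S ≠ 0 := by
      simpa [Measure.restrict_eq_zero] using hS.measure_ne_zero volume hSne
    simpa [Ham, essSup_const _ hμ] using hwmin S hS hSV (fun _ => k)
      ⟨0, (LipschitzWith.const k).lipschitzOnWith⟩ fun x hx => (hfr x hx).symm
  filter_upwards [(ae_restrict_iff' hS.measurableSet).1 (ae_le_essSup hbdd)] with x hx hxS
  exact (hx hxS).trans hcomp

theorem IsAbsMin.le_of_frontier_eq_of_closure_subset (hwmin : IsAbsMin Ham V w) (hV : IsOpen V)
    (hwl : LocallyLipschitzOn V w) (hS : IsOpen S) (hSV : closure S ⊆ V)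
    (hSb : Bornology.IsBounded S) (hfr : ∀ x ∈ frontier S, w x = k) : ∀ x ∈ S, k ≤ w x := by
  have hN : IsOpen (S ∩ w ⁻¹' Iio k) :=
    (hwl.continuousOn.mono (subset_closure.trans hSV)).isOpen_inter_preimage hS isOpen_Iio
  have hnull : volume (S ∩ w ⁻¹' Iio k) = 0 := by
    rw [measure_eq_zero_iff_ae_notMem]
    filter_upwards [hwmin.ae_ham_le_of_frontier_eq hV hwl hS hSV hSb hfr] with x hx ⟨hxS, hxk⟩
    have := hx hxS
    rw [Ham] at this
    rw [mem_preimage, mem_Iio] at hxk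
    linarith [sq_nonneg ‖gradient w x‖]
  intro x hx
  by_contra! hxk
  exact eq_empty_iff_forall_notMem.1 (hN.eq_empty_of_measure_zero hnull) x ⟨hx, hxk⟩

theorem IsAbsMin.ne_univ (hwmin : IsAbsMin Ham V w) (hVb : Bornology.IsBounded V)
    (hwl : LocallyLipschitzOn V w) : V ≠ univ := by
  rintro rfl
  have := hwmin.le_of_frontier_eq_of_closure_subset isOpen_univ hwl isOpen_univ (subset_univ _)
    hVb (k := w 0 + 1) (by simp) 0 (mem_univ 0)
  linarith

theorem IsAbsMin.le_of_frontier_eq (hwmin : IsAbsMin Ham V w) (hV : IsOpen V)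
    (hVb : Bornology.IsBounded V) (hwc : ContinuousOn w (closure V))
    (hwl : LocallyLipschitzOn V w) (hbd : ∀ x ∈ frontier V, w x = c) : ∀ x ∈ V, c ≤ w x := by
  intro x₀ hx₀
  by_contra! hx₀c
  obtain ⟨k, hx₀k, hkc⟩ := exists_between hx₀c
  have hcO : c ∉ closure (Iio k) := by simpa [closure_Iio] using hkc
  have hfr (x : Euc n) (hx : x ∈ frontier (V ∩ w ⁻¹' Iio k)) : w x = k := by
    simpa [frontier_Iio] using hV.frontier_inter_preimage_subset hwc hbd isOpen_Iio hcO hx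
  have := hwmin.le_of_frontier_eq_of_closure_subset hV hwl
    ((hwc.mono subset_closure).isOpen_inter_preimage hV isOpen_Iio)
    ((hV.closure_inter_preimage_subset hwc hbd hcO).trans inter_subset_left)
    (hVb.subset inter_subset_left) hfr x₀ ⟨hx₀, hx₀k⟩
  linarith

theorem IsAbsMin.ae_gradient_eq_zero_of_gt (hwmin : IsAbsMin Ham V w) (hV : IsOpen V)
    (hVb : Bornology.IsBounded V) (hwc : ContinuousOn w (closure V))
    (hwl : LocallyLipschitzOn V w) (hbd : ∀ x ∈ frontier V, w x = c) :
    ∀ᵐ x, x ∈ V → c < w x → gradient w x = 0 := by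
  have hlevel (q : ℚ) :
      ∀ᵐ x, x ∈ V → c < q → (q : ℝ) < w x → Ham (gradient w x) (w x) ≤ -q := by
    by_cases hcq : c < q
    · have hcO : c ∉ closure (Ioi (q : ℝ)) := by simpa [closure_Ioi] using hcq
      have hfr (x : Euc n) (hx : x ∈ frontier (V ∩ w ⁻¹' Ioi (q : ℝ))) : w x = q := by
        simpa [frontier_Ioi] using hV.frontier_inter_preimage_subset hwc hbd isOpen_Ioi hcO hx
      filter_upwards [hwmin.ae_ham_le_of_frontier_eq hV hwl
        ((hwc.mono subset_closure).isOpen_inter_preimage hV isOpen_Ioi)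
        ((hV.closure_inter_preimage_subset hwc hbd hcO).trans inter_subset_left)
        (hVb.subset inter_subset_left) hfr] with x hx hxV _ hqx using hx ⟨hxV, hqx⟩
    · exact ae_of_all _ fun x _ hcq' => absurd hcq' hcq
  filter_upwards [ae_all_iff.2 hlevel] with x hx hxV hcx
  by_contra hne
  have hpos : 0 < ‖gradient w x‖ ^ 2 / 2 := by positivity
  obtain ⟨q, hq₁, hq₂⟩ := exists_rat_btwn (max_lt hcx (sub_lt_self (w x) hpos))
  have := hx q hxV ((le_max_left _ _).trans_lt hq₁) hq₂
  rw [Ham] at this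
  linarith [(le_max_right _ _).trans_lt hq₁]

end AbsoluteMinimizer

theorem no_wells_general {n : ℕ} (V : Set (Euc n))
    (hVo : IsOpen V) (hVb : Bornology.IsBounded V) (c : ℝ)
    (w : Euc n → ℝ)
    (hwc : ContinuousOn w (closure V)) (hwl : LocLipOn V w)
    (hwmin : IsAbsMin Ham V w)
    (hbd : ∀ x ∈ frontier V, w x = c) :
    ∀ x ∈ closure V, w x = c := by
  have hwl' := hwl.locallyLipschitzOn
  have hgrad := hwmin.ae_gradient_eq_zero_of_gt hVo hVb hwc hwl' hbd
  have hloc (t : Set ℝ) : IsOpen (V ∩ w ⁻¹' Ioi c ∩ w ⁻¹' t) := by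
    refine LocallyLipschitzOn.isOpen_inter_preimage_of_ae_fderiv_eq_zero (μ := volume)
      ((hwc.mono subset_closure).isOpen_inter_preimage hVo isOpen_Ioi)
      (hwl'.mono inter_subset_left) ?_ t
    filter_upwards [hgrad] with x hx ⟨hxV, hxc⟩
    rw [← toDual_gradient, hx hxV hxc, map_zero]
  have hmin := hwmin.le_of_frontier_eq hVo hVb hwc hwl' hbd
  have hmax := hVo.le_of_frontier_eq_of_isOpen_level (hwmin.ne_univ hVb hwl')
    hVb.isCompact_closure hwc hbd hloc
  intro x hx
  by_contra hne
  have hxV := hVo.mem_of_mem_closure_of_ne hbd hx hne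
  exact hne (le_antisymm (hmax x hxV) (hmin x hxV))

/-- Lemma 2.2: the graph of an absolute minimizer for `H(p,z) = ½|p|² - z`
contains no wells: if it is constant on the boundary then it is constant. -/
theorem no_wells {n : ℕ} (V : Set (Euc n))
    (hVo : IsOpen V) (hVb : Bornology.IsBounded V) (hVne : V.Nonempty) (c : ℝ)
    (w : Euc n → ℝ)
    (hwc : ContinuousOn w (closure V)) (hwl : LocLipOn V w)
    (hwmin : IsAbsMin Ham V w)
    (hbd : ∀ x ∈ frontier V, w x = c) :
    ∀ x ∈ closure V, w x = c :=
  no_wells_general V hVo hVb c w hwc hwl hwmin hbd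
end
end

section
/- Let Ω ⊂ ℝⁿ be a bounded nonempty open set and let u ∈ C(closure Ω) be a viscosity solution of Δ∞u − |Du|² = 0 on Ω. Then u is a viscosity solution of the normalized equation Δ∞u/|Du|² = 1 on Ω (i.e. u is the continuum value function with boundary data u|_{∂Ω}) if and only if the graph of u has no flat piece, i.e. u is not constant on any nonempty open subset of Ω. -/
open Set MeasureTheory

noncomputable section

/-!
Everything is tested against paraboloids `ψ x = c‖x - y‖²`, for which
`Δ∞ψ - |Dψ|² = (2c - 1)|Dψ|²`. So for `c < 1/2` a subsolution can be touched from above by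
`ψ` only at the vertex `y`, and for `c > 1/2` a supersolution can be touched from below only at
the vertex.

If the normalized subsolution condition fails at a critical point `x₀` of a test function, Taylor
expansion gives `u x ≤ u x₀ + c‖x - x₀‖²` near `x₀` with `c < 1/2`. Sliding the vertex over a
small ball then gives `u x ≤ u y + c'‖x - y‖²` for all nearby `x, y`. Hence `Du = 0` there, and
`u` has a flat piece. If the normalized supersolution condition fails, we get instead
`u x ≥ u x₀ + c‖x - x₀‖²` with `c > 1/2`. Moving the vertex slightly off `x₀` along any unit
vector then produces a contradiction, so this case cannot happen at all. Conversely, a flat piece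
is touched from above by `¼‖x - x₀‖²`, whose Hessian has all eigenvalues `1/2 < 1`.
-/
open Filter Metric Topology
open scoped RealInnerProductSpace

section SecondDerivative

variable {n : ℕ}

theorem D2_eq_fderiv_fderiv (φ : Euc n → ℝ) (x p q : Euc n) :
    D2 φ x p q = fderiv ℝ (fderiv ℝ φ) x p q := by
  simp [D2, iteratedFDeriv_two_apply]

theorem D2_neg (φ : Euc n → ℝ) (x p q : Euc n) : D2 (fun y => -φ y) x p q = -D2 φ x p q := by
  have : fderiv ℝ (fun y => -φ y) = fun y => -fderiv ℝ φ y := funext fun y => fderiv_fun_neg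
  simp [D2_eq_fderiv_fderiv, this, fderiv_fun_neg]

theorem D2_smul_smul (φ : Euc n → ℝ) (x v : Euc n) (t : ℝ) :
    D2 φ x (t • v) (t • v) = t ^ 2 * D2 φ x v v := by
  simp only [D2_eq_fderiv_fderiv, map_smul, smul_apply, smul_eq_mul]
  ring

theorem gradient_fun_neg (φ : Euc n → ℝ) (x : Euc n) :
    gradient (fun y => -φ y) x = -gradient φ x := by
  simp [gradient, fderiv_fun_neg]

end SecondDerivative

section Paraboloid

variable {n : ℕ}

theorem contDiff_mul_norm_sub_sq (c : ℝ) (y : Euc n) :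
    ContDiff ℝ 2 fun x => c * ‖x - y‖ ^ 2 :=
  contDiff_const.mul ((contDiff_norm_sq ℝ).comp (contDiff_id.sub contDiff_const))

theorem hasFDerivAt_mul_norm_sub_sq (c : ℝ) (y z : Euc n) :
    HasFDerivAt (fun x => c * ‖x - y‖ ^ 2) ((2 * c) • innerSL ℝ (z - y)) z := by
  refine (((hasStrictFDerivAt_norm_sq (z - y)).hasFDerivAt.comp z
    ((hasFDerivAt_id z).sub_const y)).const_mul c).congr_fderiv ?_
  ext v
  simp only [map_sub, ContinuousLinearMap.comp_id, smul_apply, sub_apply, coe_innerSL_apply,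
    nsmul_eq_mul, Nat.cast_ofNat, smul_eq_mul]
  ring

theorem gradient_mul_norm_sub_sq (c : ℝ) (y z : Euc n) :
    gradient (fun x => c * ‖x - y‖ ^ 2) z = (2 * c) • (z - y) := by
  refine (hasGradientAt_iff_hasFDerivAt.2 ?_).gradient
  refine (hasFDerivAt_mul_norm_sub_sq c y z).congr_fderiv ?_
  ext v
  simp

theorem D2_mul_norm_sub_sq (c : ℝ) (y z p q : Euc n) :
    D2 (fun x => c * ‖x - y‖ ^ 2) z p q = 2 * c * ⟪p, q⟫ := by
  have hfd : fderiv ℝ (fun x => c * ‖x - y‖ ^ 2) = fun z => (2 * c) • innerSL ℝ (z - y) :=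
    funext fun z => (hasFDerivAt_mul_norm_sub_sq c y z).fderiv
  have : HasFDerivAt (fun z => (2 * c) • innerSL ℝ (z - y)) ((2 * c) • innerSL ℝ (E := Euc n)) z :=
    (((innerSL ℝ).hasFDerivAt).comp z ((hasFDerivAt_id z).sub_const y)).const_smul (2 * c)
  rw [D2_eq_fderiv_fderiv, hfd, this.fderiv, smul_apply,
    smul_apply, innerSL_apply_apply, smul_eq_mul]

end Paraboloid

section Taylor

variable {n : ℕ} {φ : Euc n → ℝ}

theorem D2_apply_self_ge_of_forall_norm_eq_one {x : Euc n} {a : ℝ}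
    (h : ∀ p : Euc n, ‖p‖ = 1 → a ≤ D2 φ x p p) (v : Euc n) : a * ‖v‖ ^ 2 ≤ D2 φ x v v := by
  rcases eq_or_ne v 0 with rfl | hv
  · simp [D2_eq_fderiv_fderiv]
  have hp : ‖‖v‖⁻¹ • v‖ = 1 := by simp [norm_smul, hv]
  have hvp : ‖v‖ • ‖v‖⁻¹ • v = v := by simp [smul_smul, hv]
  calc a * ‖v‖ ^ 2 ≤ D2 φ x (‖v‖⁻¹ • v) (‖v‖⁻¹ • v) * ‖v‖ ^ 2 := by gcongr; exact h _ hp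
    _ = D2 φ x v v := by rw [← hvp, D2_smul_smul, hvp]; field_simp

theorem ContDiff.eventually_D2_ge (hφ : ContDiff ℝ 2 φ) {x₀ : Euc n} {a b : ℝ}
    (h : ∀ v, a * ‖v‖ ^ 2 ≤ D2 φ x₀ v v) (hba : b < a) :
    ∀ᶠ x in 𝓝 x₀, ∀ v, b * ‖v‖ ^ 2 ≤ D2 φ x v v := by
  set H := fderiv ℝ (fderiv ℝ φ)
  have hH : Continuous H := (hφ.fderiv_right (m := 1) le_rfl).continuous_fderiv one_ne_zero
  filter_upwards [hH.continuousAt.eventually (ball_mem_nhds (H x₀) (sub_pos.2 hba))] with x hx v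
  have hclose : |D2 φ x v v - D2 φ x₀ v v| ≤ (a - b) * ‖v‖ ^ 2 := by
    have hx' : ‖H x - H x₀‖ ≤ a - b := (dist_eq_norm (H x) (H x₀)).symm.trans_le hx.le
    calc |D2 φ x v v - D2 φ x₀ v v| = ‖(H x - H x₀) v v‖ := by
          simp [D2_eq_fderiv_fderiv, H, Real.norm_eq_abs]
      _ ≤ ‖H x - H x₀‖ * ‖v‖ * ‖v‖ := (H x - H x₀).le_opNorm₂ v v
      _ ≤ (a - b) * ‖v‖ ^ 2 := by rw [mul_assoc, ← sq]; gcongr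
  linarith [h v, (abs_le.1 hclose).1]

theorem Convex.add_fderiv_add_mul_norm_sub_sq_le {s : Set (Euc n)} (hs : Convex ℝ s)
    (hφ : ContDiff ℝ 2 φ) {b : ℝ} (hb : ∀ x ∈ s, ∀ v, b * ‖v‖ ^ 2 ≤ D2 φ x v v) {x₀ x : Euc n}
    (hx₀ : x₀ ∈ s) (hx : x ∈ s) :
    φ x₀ + fderiv ℝ φ x₀ (x - x₀) + b / 2 * ‖x - x₀‖ ^ 2 ≤ φ x := by
  set v := x - x₀
  have hline (t : ℝ) : HasDerivAt (fun t : ℝ => x₀ + t • v) v t := by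
    simpa using ((hasDerivAt_id t).smul_const v).const_add x₀
  have hquad (t : ℝ) : HasDerivAt (fun t : ℝ => b * ‖v‖ ^ 2 / 2 * t ^ 2) (b * ‖v‖ ^ 2 * t) t := by
    refine ((hasDerivAt_pow 2 t).const_mul (b * ‖v‖ ^ 2 / 2)).congr_deriv ?_
    norm_num
    ring
  have hg (t : ℝ) : HasDerivAt (fun t => φ (x₀ + t • v) - b * ‖v‖ ^ 2 / 2 * t ^ 2)
      (fderiv ℝ φ (x₀ + t • v) v - b * ‖v‖ ^ 2 * t) t :=
    ((hφ.differentiable two_ne_zero _).hasFDerivAt.comp_hasDerivAt t (hline t)).sub (hquad t)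
  have hg' (t : ℝ) : HasDerivAt (fun t => fderiv ℝ φ (x₀ + t • v) v - b * ‖v‖ ^ 2 * t)
      (D2 φ (x₀ + t • v) v v - b * ‖v‖ ^ 2) t := by
    have hdφ :=
      ((hφ.fderiv_right (m := 1) le_rfl).differentiable one_ne_zero (x₀ + t • v)).hasFDerivAt
    rw [D2_eq_fderiv_fderiv]
    exact ((ContinuousLinearMap.apply ℝ ℝ v).hasFDerivAt.comp_hasDerivAt t
      (hdφ.comp_hasDerivAt t (hline t))).sub
      ((hasDerivAt_id t).const_mul _ |>.congr_deriv (by simp))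
  have hconv : ConvexOn ℝ (Icc 0 1) fun t => φ (x₀ + t • v) - b * ‖v‖ ^ 2 / 2 * t ^ 2 := by
    refine convexOn_of_hasDerivWithinAt2_nonneg (convex_Icc 0 1)
      (fun t _ => (hg t).continuousAt.continuousWithinAt) (fun t _ => (hg t).hasDerivWithinAt)
      (fun t _ => (hg' t).hasDerivWithinAt) fun t ht => ?_
    rw [interior_Icc] at ht
    linarith [hb _ (hs.add_smul_sub_mem hx₀ hx ⟨ht.1.le, ht.2.le⟩) v]
  have := hconv.le_slope_of_hasDerivAt (left_mem_Icc.2 zero_le_one) (right_mem_Icc.2 zero_le_one)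
    zero_lt_one (hg 0)
  simp only [slope_def_field, zero_smul, one_smul, add_zero, mul_zero, sub_zero, one_pow, mul_one,
    div_one, v, add_sub_cancel] at this
  linarith

theorem ContDiff.exists_gt_eventually_add_mul_norm_sub_sq_le (hφ : ContDiff ℝ 2 φ) {x₀ : Euc n}
    (hgrad : gradient φ x₀ = 0) {κ : ℝ} (h : ∀ p : Euc n, ‖p‖ = 1 → κ < D2 φ x₀ p p) :
    ∃ c > κ / 2, ∀ᶠ x in 𝓝 x₀, φ x₀ + c * ‖x - x₀‖ ^ 2 ≤ φ x := by
  have hcont : Continuous fun p => D2 φ x₀ p p := by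
    simp_rw [D2_eq_fderiv_fderiv]
    exact (fderiv ℝ (fderiv ℝ φ) x₀).continuous.clm_apply continuous_id
  obtain ⟨a, hκa, ha⟩ := (isCompact_sphere (0 : Euc n) 1).exists_forall_le' hcont.continuousOn
    fun p hp => h p (mem_sphere_zero_iff_norm.1 hp)
  have hD2 :=
    D2_apply_self_ge_of_forall_norm_eq_one fun p hp => ha p (mem_sphere_zero_iff_norm.2 hp)
  obtain ⟨σ, hσ, hball⟩ := eventually_nhds_iff_ball.1
    (hφ.eventually_D2_ge hD2 (b := (κ + a) / 2) (by linarith))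
  refine ⟨(κ + a) / 4, by linarith, ?_⟩
  filter_upwards [ball_mem_nhds x₀ hσ] with x hx
  have := (convex_ball x₀ σ).add_fderiv_add_mul_norm_sub_sq_le hφ hball (mem_ball_self hσ) hx
  rw [show fderiv ℝ φ x₀ = 0 by simpa [gradient] using hgrad] at this
  simp only [zero_apply, add_zero] at this
  linarith

theorem ContDiff.exists_lt_eventually_le_add_mul_norm_sub_sq (hφ : ContDiff ℝ 2 φ) {x₀ : Euc n}
    (hgrad : gradient φ x₀ = 0) {κ : ℝ} (h : ∀ p : Euc n, ‖p‖ = 1 → D2 φ x₀ p p < κ) :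
    ∃ c < κ / 2, ∀ᶠ x in 𝓝 x₀, φ x ≤ φ x₀ + c * ‖x - x₀‖ ^ 2 := by
  obtain ⟨c, hc, hev⟩ := hφ.neg.exists_gt_eventually_add_mul_norm_sub_sq_le
    (by rw [gradient_fun_neg, hgrad, neg_zero]) (κ := -κ) fun p hp => by
      rw [D2_neg]; linarith [h p hp]
  exact ⟨-c, by linarith, hev.mono fun x hx => by linarith⟩

end Taylor

theorem exists_mem_ball_isMaxOn_closedBall {X : Type*} [PseudoMetricSpace X] [ProperSpace X]
    {f : X → ℝ} {c : X} {ρ : ℝ} (hf : ContinuousOn f (closedBall c ρ)) (hρ : 0 ≤ ρ)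
    (h : ∀ z ∈ sphere c ρ, f z < f c) : ∃ z ∈ ball c ρ, IsMaxOn f (closedBall c ρ) z := by
  obtain ⟨z, hz, hmax⟩ :=
    (isCompact_closedBall c ρ).exists_isMaxOn ⟨c, mem_closedBall_self hρ⟩ hf
  refine ⟨z, (mem_closedBall.1 hz).lt_of_ne fun hzρ => ?_, hmax⟩
  exact (h z hzρ).not_ge (hmax (mem_closedBall_self hρ))

theorem exists_mem_ball_isMinOn_closedBall {X : Type*} [PseudoMetricSpace X] [ProperSpace X]
    {f : X → ℝ} {c : X} {ρ : ℝ} (hf : ContinuousOn f (closedBall c ρ)) (hρ : 0 ≤ ρ)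
    (h : ∀ z ∈ sphere c ρ, f c < f z) : ∃ z ∈ ball c ρ, IsMinOn f (closedBall c ρ) z := by
  obtain ⟨z, hz, hmax⟩ :=
    exists_mem_ball_isMaxOn_closedBall hf.neg hρ fun z hz => neg_lt_neg (h z hz)
  exact ⟨z, hz, by simpa using hmax.neg⟩

theorem IsOpen.is_const_of_sub_le_mul_norm_sub_sq {E : Type*} [NormedAddCommGroup E]
    [NormedSpace ℝ E] {s : Set E} (hs : IsOpen s) (hs' : IsPreconnected s) {f : E → ℝ} {C : ℝ}
    (hf : ∀ x ∈ s, ∀ y ∈ s, f x - f y ≤ C * ‖x - y‖ ^ 2) {x y : E} (hx : x ∈ s) (hy : y ∈ s) :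
    f x = f y := by
  have hderiv : ∀ y ∈ s, HasFDerivAt f (0 : E →L[ℝ] ℝ) y := by
    intro y hy
    have hO : (fun x => f x - f y) =O[𝓝 y] fun x => ‖x - y‖ ^ 2 := by
      refine Asymptotics.IsBigO.of_bound C ?_
      filter_upwards [hs.mem_nhds hy] with x hx
      have hyx := hf y hy x hx
      rw [norm_sub_rev] at hyx
      rw [Real.norm_eq_abs, norm_pow, norm_norm, abs_le]
      exact ⟨by linarith, hf x hx y hy⟩
    simpa using (hO.hasFDerivAt (𝕜 := ℝ) one_lt_two).add_const (f y)
  exact hs.is_const_of_fderiv_eq_zero hs'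
    (fun z hz => (hderiv z hz).differentiableAt.differentiableWithinAt)
    (fun z hz => (hderiv z hz).fderiv) hx hy

section Viscosity

variable {n : ℕ} {Ω : Set (Euc n)} {u : Euc n → ℝ}

theorem IsSubsol.eq_of_isLocalMaxOn (hu : IsSubsol Ω u) {c : ℝ} (hc₀ : 0 < c) (hc : c < 1 / 2)
    {y z : Euc n} (hz : z ∈ Ω) (hmax : IsLocalMaxOn (fun x => u x - c * ‖x - y‖ ^ 2) Ω z) :
    z = y := by
  have h := hu _ (contDiff_mul_norm_sub_sq c y) z hz hmax
  rw [gradient_mul_norm_sub_sq, D2_mul_norm_sub_sq, real_inner_self_eq_norm_sq] at h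
  have : ‖(2 * c) • (z - y)‖ ^ 2 = 0 := by nlinarith [sq_nonneg ‖(2 * c) • (z - y)‖]
  simpa [norm_smul, hc₀.ne', sub_eq_zero] using this

theorem IsSupersol.eq_of_isLocalMinOn (hu : IsSupersol Ω u) {c : ℝ} (hc : 1 / 2 < c)
    {y z : Euc n} (hz : z ∈ Ω) (hmin : IsLocalMinOn (fun x => u x - c * ‖x - y‖ ^ 2) Ω z) :
    z = y := by
  have h := hu _ (contDiff_mul_norm_sub_sq c y) z hz hmin
  rw [gradient_mul_norm_sub_sq, D2_mul_norm_sub_sq, real_inner_self_eq_norm_sq] at h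
  have : ‖(2 * c) • (z - y)‖ ^ 2 = 0 := by nlinarith [sq_nonneg ‖(2 * c) • (z - y)‖]
  simpa [norm_smul, (by linarith : c ≠ 0), sub_eq_zero] using this

theorem IsSubsol.le_add_mul_norm_sub_sq (hu : IsSubsol Ω u) {x₀ y : Euc n} {ρ c : ℝ}
    (hρ : 0 ≤ ρ) (hρΩ : closedBall x₀ ρ ⊆ Ω) (huc : ContinuousOn u (closedBall x₀ ρ))
    (hc₀ : 0 < c) (hc : c < 1 / 2)
    (hsphere : ∀ z ∈ sphere x₀ ρ, u z - c * ‖z - y‖ ^ 2 < u x₀ - c * ‖x₀ - y‖ ^ 2)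
    {x : Euc n} (hx : x ∈ closedBall x₀ ρ) : u x ≤ u y + c * ‖x - y‖ ^ 2 := by
  obtain ⟨z, hz, hmax⟩ := exists_mem_ball_isMaxOn_closedBall
    (huc.sub (contDiff_mul_norm_sub_sq c y).continuous.continuousOn) hρ hsphere
  obtain rfl : z = y := hu.eq_of_isLocalMaxOn hc₀ hc (hρΩ (ball_subset_closedBall hz))
    ((hmax.isLocalMax (closedBall_mem_nhds_of_mem hz)).on Ω)
  have : u x - c * ‖x - z‖ ^ 2 ≤ u z - c * ‖z - z‖ ^ 2 := hmax hx
  rw [sub_self, norm_zero] at this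
  linarith

theorem IsSupersol.add_mul_norm_sub_sq_le (hu : IsSupersol Ω u) {x₀ y : Euc n} {ρ c : ℝ}
    (hρ : 0 ≤ ρ) (hρΩ : closedBall x₀ ρ ⊆ Ω) (huc : ContinuousOn u (closedBall x₀ ρ))
    (hc : 1 / 2 < c)
    (hsphere : ∀ z ∈ sphere x₀ ρ, u x₀ - c * ‖x₀ - y‖ ^ 2 < u z - c * ‖z - y‖ ^ 2)
    {x : Euc n} (hx : x ∈ closedBall x₀ ρ) : u y + c * ‖x - y‖ ^ 2 ≤ u x := by
  obtain ⟨z, hz, hmin⟩ := exists_mem_ball_isMinOn_closedBall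
    (huc.sub (contDiff_mul_norm_sub_sq c y).continuous.continuousOn) hρ hsphere
  obtain rfl : z = y := hu.eq_of_isLocalMinOn hc (hρΩ (ball_subset_closedBall hz))
    ((hmin.isLocalMin (closedBall_mem_nhds_of_mem hz)).on Ω)
  have : u z - c * ‖z - z‖ ^ 2 ≤ u x - c * ‖x - z‖ ^ 2 := hmin hx
  rw [sub_self, norm_zero] at this
  linarith

theorem IsSubsol.hasFlat_of_eventually_le (hu : IsSubsol Ω u) (hΩ : IsOpen Ω)
    (huc : ContinuousOn u Ω) {x₀ : Euc n} (hx₀ : x₀ ∈ Ω) {a : ℝ} (ha : a < 1 / 2)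
    (hle : ∀ᶠ x in 𝓝 x₀, u x ≤ u x₀ + a * ‖x - x₀‖ ^ 2) : HasFlat Ω u := by
  obtain ⟨ρ, hρ, hρle⟩ := nhds_basis_closedBall.eventually_iff.1 (hle.and (hΩ.mem_nhds hx₀))
  set a' := max a (1 / 4)
  have ha' : a' < 1 / 2 := max_lt ha (by norm_num)
  have ha'₀ : 1 / 4 ≤ a' := le_max_right _ _
  set c := (a' + 1 / 2) / 2 with hc
  have hc₀ : 0 < c := by linarith
  have hc₁ : c < 1 / 2 := by linarith
  have hca : a' < c := by linarith
  set τ := (c - a') * ρ with hτ_def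
  have hτ : 0 < τ := mul_pos (by linarith) hρ
  have hτρ : τ ≤ ρ := mul_le_of_le_one_left hρ.le (by linarith)
  have hcmp : ∀ y ∈ ball x₀ τ, ∀ x ∈ closedBall x₀ ρ, u x ≤ u y + c * ‖x - y‖ ^ 2 := by
    intro y hy x hx
    refine hu.le_add_mul_norm_sub_sq hρ.le (fun z hz => (hρle hz).2)
      (huc.mono fun z hz => (hρle hz).2) (by positivity) (by linarith) (fun z hz => ?_) hx
    rw [mem_sphere_iff_norm] at hz
    rw [mem_ball_iff_norm] at hy
    have huz : u z ≤ u x₀ + a' * ρ ^ 2 := by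
      calc u z ≤ u x₀ + a * ‖z - x₀‖ ^ 2 := (hρle (mem_closedBall_iff_norm.2 hz.le)).1
        _ ≤ u x₀ + a' * ρ ^ 2 := by rw [hz]; gcongr; exact le_max_left _ _
    have hzy : (ρ - τ) ^ 2 ≤ ‖z - y‖ ^ 2 := by
      have : ρ - τ ≤ ‖z - y‖ := by linarith [norm_sub_le_norm_sub_add_norm_sub z y x₀]
      gcongr
    have hyx₀ : ‖x₀ - y‖ ^ 2 < τ ^ 2 := by
      rw [norm_sub_rev]; gcongr
    have key : a' * ρ ^ 2 - c * (ρ - τ) ^ 2 + c * τ ^ 2 = -((c - a') * (1 - 2 * c) * ρ ^ 2) := by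
      rw [hτ_def]; ring
    have : 0 ≤ (c - a') * (1 - 2 * c) * ρ ^ 2 :=
      mul_nonneg (mul_nonneg (by linarith) (by linarith)) (sq_nonneg ρ)
    nlinarith [mul_le_mul_of_nonneg_left hzy hc₀.le, mul_lt_mul_of_pos_left hyx₀ hc₀]
  refine ⟨ball x₀ τ, nonempty_ball.2 hτ, isOpen_ball,
    fun x hx => (hρle (closedBall_subset_closedBall hτρ (ball_subset_closedBall hx))).2,
    u x₀, fun x hx => ?_⟩
  refine isOpen_ball.is_const_of_sub_le_mul_norm_sub_sq (C := c)
    (convex_ball x₀ τ).isPreconnected (fun x hx y hy => ?_) hx (mem_ball_self hτ)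
  linarith [hcmp y hy x (closedBall_subset_closedBall hτρ (ball_subset_closedBall hx))]

theorem IsSupersol.not_eventually_add_mul_norm_sub_sq_le [Nontrivial (Euc n)]
    (hu : IsSupersol Ω u) (hΩ : IsOpen Ω) (huc : ContinuousOn u Ω) {x₀ : Euc n} (hx₀ : x₀ ∈ Ω)
    {a : ℝ} (ha : 1 / 2 < a) : ¬ ∀ᶠ x in 𝓝 x₀, u x₀ + a * ‖x - x₀‖ ^ 2 ≤ u x := by
  intro hge
  obtain ⟨ρ, hρ, hρge⟩ := nhds_basis_closedBall.eventually_iff.1 (hge.and (hΩ.mem_nhds hx₀))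
  set c := (a + 1 / 2) / 2 with hc
  have hc₀ : 1 / 2 < c := by linarith
  have hca : c < a := by linarith
  set t := min ρ ((a - c) * ρ / (4 * c))
  have ht : 0 < t := lt_min hρ (by positivity)
  have htρ : t ≤ ρ := min_le_left _ _
  have hct : 4 * c * t ≤ (a - c) * ρ := by
    rw [mul_comm, ← le_div_iff₀ (by positivity)]
    exact min_le_right _ _
  obtain ⟨w, hw⟩ := exists_norm_eq (Euc n) ht.le
  have hy : x₀ + w ∈ closedBall x₀ ρ := by simpa [mem_closedBall_iff_norm, hw] using htρ
  have hsphere : ∀ z ∈ sphere x₀ ρ,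
      u x₀ - c * ‖x₀ - (x₀ + w)‖ ^ 2 < u z - c * ‖z - (x₀ + w)‖ ^ 2 := by
    intro z hz
    rw [mem_sphere_iff_norm] at hz
    have huz : u x₀ + a * ρ ^ 2 ≤ u z := by
      simpa [hz] using (hρge (mem_closedBall_iff_norm.2 hz.le)).1
    have hzy : ‖z - (x₀ + w)‖ ^ 2 ≤ (ρ + t) ^ 2 := by
      have : ‖z - (x₀ + w)‖ ≤ ρ + t := by
        rw [← hz, ← hw, sub_add_eq_sub_sub]
        exact norm_sub_le _ _
      gcongr
    simp only [sub_add_cancel_left, norm_neg, hw]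
    nlinarith [mul_le_mul_of_nonneg_left hzy (by linarith : (0 : ℝ) ≤ c)]
  have hcmp := hu.add_mul_norm_sub_sq_le hρ.le (fun z hz => (hρge hz).2)
    (huc.mono fun z hz => (hρge hz).2) hc₀ hsphere (mem_closedBall_self hρ.le)
  have hgrow := (hρge hy).1
  simp only [add_sub_cancel_left, sub_add_cancel_left, norm_neg, hw] at hgrow hcmp
  nlinarith

theorem IsSubsol.isNormSubsol (hu : IsSubsol Ω u) (hΩ : IsOpen Ω) (huc : ContinuousOn u Ω)
    (hflat : ¬ HasFlat Ω u) : IsNormSubsol Ω u := by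
  intro φ hφ x₀ hx₀ hmax
  refine ⟨fun _ => by linarith [hu φ hφ x₀ hx₀ hmax], fun hgrad => ?_⟩
  by_contra! hlt
  obtain ⟨c, hc, hφc⟩ := hφ.exists_lt_eventually_le_add_mul_norm_sub_sq hgrad hlt
  refine hflat (hu.hasFlat_of_eventually_le hΩ huc hx₀ hc ?_)
  filter_upwards [hmax.isLocalMax (hΩ.mem_nhds hx₀), hφc] with x hux hφx
  linarith

theorem IsSupersol.isNormSupersol [Nontrivial (Euc n)] (hu : IsSupersol Ω u) (hΩ : IsOpen Ω)
    (huc : ContinuousOn u Ω) : IsNormSupersol Ω u := by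
  intro φ hφ x₀ hx₀ hmin
  refine ⟨fun _ => by linarith [hu φ hφ x₀ hx₀ hmin], fun hgrad => ?_⟩
  by_contra! hgt
  obtain ⟨c, hc, hφc⟩ := hφ.exists_gt_eventually_add_mul_norm_sub_sq_le hgrad hgt
  refine hu.not_eventually_add_mul_norm_sub_sq_le hΩ huc hx₀ hc ?_
  filter_upwards [hmin.isLocalMin (hΩ.mem_nhds hx₀), hφc] with x hux hφx
  linarith

theorem HasFlat.not_isNormSubsol (hflat : HasFlat Ω u) : ¬ IsNormSubsol Ω u := by
  obtain ⟨V, ⟨x₀, hx₀⟩, hVo, hVΩ, c, hc⟩ := hflat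
  intro hu
  have hmax : IsLocalMaxOn (fun x => u x - 1 / 4 * ‖x - x₀‖ ^ 2) Ω x₀ := by
    filter_upwards [mem_nhdsWithin_of_mem_nhds (hVo.mem_nhds hx₀)] with x hx
    simp only [hc x hx, hc x₀ hx₀, sub_self, norm_zero]
    nlinarith [sq_nonneg ‖x - x₀‖]
  obtain ⟨p, hp, hD2⟩ := (hu _ (contDiff_mul_norm_sub_sq _ x₀) x₀ (hVΩ hx₀) hmax).2
    (by simp [gradient_mul_norm_sub_sq])
  rw [D2_mul_norm_sub_sq, real_inner_self_eq_norm_sq, hp] at hD2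
  norm_num at hD2

theorem hasFlat_of_subsingleton [Subsingleton (Euc n)] (hΩ : IsOpen Ω) (hΩne : Ω.Nonempty) :
    HasFlat Ω u :=
  ⟨Ω, hΩne, hΩ, subset_rfl, u hΩne.some, fun _ _ => congrArg u (Subsingleton.elim _ _)⟩

end Viscosity

theorem value_function_iff_no_flat_piece_general {n : ℕ} (Ω : Set (Euc n))
    (hΩo : IsOpen Ω) (hΩne : Ω.Nonempty)
    (u : Euc n → ℝ)
    (huc : ContinuousOn u (closure Ω)) (husol : IsSol Ω u) :
    (IsNormSubsol Ω u ∧ IsNormSupersol Ω u) ↔ ¬ HasFlat Ω u := by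
  have huc' : ContinuousOn u Ω := huc.mono subset_closure
  refine ⟨fun h hflat => hflat.not_isNormSubsol h.1, fun hflat => ?_⟩
  have : Nontrivial (Euc n) :=
    not_subsingleton_iff_nontrivial.1 fun _ => hflat (hasFlat_of_subsingleton hΩo hΩne)
  exact ⟨husol.1.isNormSubsol hΩo huc' hflat, husol.2.isNormSupersol hΩo huc'⟩

/-- Theorem 3.1 (ii): a viscosity solution of `Δ∞u - |Du|² = 0` is a
viscosity solution of the normalized equation `Δ∞u/|Du|² = 1` (i.e. the continuum value
function with its own boundary data) if and only if its graph has no flat piece. -/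
theorem value_function_iff_no_flat_piece {n : ℕ} (Ω : Set (Euc n))
    (hΩo : IsOpen Ω) (hΩb : Bornology.IsBounded Ω) (hΩne : Ω.Nonempty)
    (u : Euc n → ℝ)
    (huc : ContinuousOn u (closure Ω)) (husol : IsSol Ω u) :
    (IsNormSubsol Ω u ∧ IsNormSupersol Ω u) ↔ ¬ HasFlat Ω u :=
  value_function_iff_no_flat_piece_general Ω hΩo hΩne u huc husol
end
end
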